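/- arXiv:1805.12119 — 2 statements merged into one kernel-verified Lean document; each statement's English description precedes it below -/
import Mathlib

section
/- Let G be a finite group whose power graph 𝒢(G) is non-complete and minimally edge-connected, and suppose G has a maximal subgroup of order two. Then the edge-connectivity of 𝒢(G) equals 1 and 𝒢(G) is a tree. -/
open Subgroup

/-- The power graph of a group: distinct `u`, `v` are adjacent iff one is a
positive integer power of the other. -/
def powerGraph (G : Type*) [Group G] : SimpleGraph G where
  Adj u v := u ≠ v ∧ ((∃ n : ℕ, 0 < n ∧ v = u ^ n) ∨ (∃ m : ℕ, 0 < m ∧ u = v ^ m))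
  symm := ⟨fun u v h => ⟨h.1.symm, h.2.symm⟩⟩
  loopless := ⟨fun u h => h.1 rfl⟩

/-- The degree of a vertex in a graph. -/
noncomputable def gDegree {V : Type*} (Γ : SimpleGraph V) (x : V) : ℕ :=
  (Γ.neighborSet x).ncard

/-- The minimum degree δ(Γ) of a graph. -/
noncomputable def gMinDegree {V : Type*} (Γ : SimpleGraph V) : ℕ :=
  sInf (Set.range (gDegree Γ))

/-- The edge-connectivity κ'(Γ): the least size of a set of edges whose deletion
disconnects the graph. -/
noncomputable def edgeConn {V : Type*} (Γ : SimpleGraph V) : ℕ :=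
  sInf {k | ∃ s : Finset (Sym2 V), s.card = k ∧ ↑s ⊆ Γ.edgeSet ∧
    ¬ (Γ.deleteEdges ↑s).Connected}

/-- The vertex connectivity κ(Γ): the least size of a set of vertices whose deletion
disconnects the graph or leaves at most one vertex. -/
noncomputable def vertConn {V : Type*} (Γ : SimpleGraph V) : ℕ :=
  sInf {k | ∃ S : Set V, S.Finite ∧ S.ncard = k ∧
    (¬ (Γ.induce Sᶜ).Preconnected ∨ Sᶜ.Subsingleton)}

/-- A nontrivial connected graph is minimally edge-connected if deleting any edge
drops the edge-connectivity by exactly one. -/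
def MinimallyEdgeConnected {V : Type*} (Γ : SimpleGraph V) : Prop :=
  Nontrivial V ∧ Γ.Connected ∧
    ∀ e ∈ Γ.edgeSet, edgeConn (Γ.deleteEdges {e}) = edgeConn Γ - 1

/-- A nontrivial connected graph is minimally connected if deleting any edge
drops the vertex connectivity by exactly one. -/
def MinimallyConnected {V : Type*} (Γ : SimpleGraph V) : Prop :=
  Nontrivial V ∧ Γ.Connected ∧
    ∀ e ∈ Γ.edgeSet, vertConn (Γ.deleteEdges {e}) = vertConn Γ - 1

/-- `S` is a separating set of `Γ` if deleting the vertices of `S` leaves a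
disconnected graph. -/
def IsSeparatingSet {V : Type*} (Γ : SimpleGraph V) (S : Set V) : Prop :=
  ¬ (Γ.induce Sᶜ).Preconnected

/-- `S` is a minimum separating set of `Γ`. -/
def IsMinSeparatingSet {V : Type*} (Γ : SimpleGraph V) (S : Set V) : Prop :=
  IsSeparatingSet Γ S ∧ ∀ T : Set V, IsSeparatingSet Γ T → S.ncard ≤ T.ncard

/-- `y` generates a maximal cyclic subgroup of `G`: the cyclic subgroup `⟨y⟩` is
not properly contained in any cyclic subgroup. -/
def IsMaxCyclicGen {G : Type*} [Group G] (y : G) : Prop :=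
  ∀ z : G, zpowers y ≤ zpowers z → zpowers y = zpowers z

/-- A subgroup is maximal cyclic if it is cyclic and not properly contained in
any cyclic subgroup. -/
def IsMaximalCyclicSubgroup {G : Type*} [Group G] (H : Subgroup G) : Prop :=
  (∃ y : G, H = zpowers y) ∧ ∀ z : G, H ≤ zpowers z → H = zpowers z

/-!
Let `H = {1, t}` be the maximal subgroup of order two. A neighbour `v ≠ 1` of `t` in the power
graph has `t` among its powers, so `⟨v⟩ ⊋ H` and `v` generates `G`. If such a generator `g`
exists, `1` and `g` are both adjacent to all other `n - 2` vertices. The edge `1g` is critical,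
so a minimum edge cut of `𝒢(G) - 1g` must separate `1` from `g` and hence contain an edge at each
common neighbour, giving `κ' - 1 ≥ n - 2`; but a vertex with a non-neighbour shows
`κ' ≤ δ ≤ n - 2`. So `t` is a leaf, `κ' = 1`, and minimal edge-connectivity makes every edge a
bridge.
-/

section EdgeConnectivity

open SimpleGraph

variable {V : Type*} (Γ : SimpleGraph V)

lemma edgeConn_le_card {s : Finset (Sym2 V)} (hs : ↑s ⊆ Γ.edgeSet)
    (hdisc : ¬ (Γ.deleteEdges ↑s).Connected) : edgeConn Γ ≤ s.card :=
  Nat.sInf_le ⟨s, rfl, hs, hdisc⟩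

lemma not_connected_deleteEdges_incidenceSet [Nontrivial V] (x : V) :
    ¬ (Γ.deleteEdges (Γ.incidenceSet x)).Connected := by
  intro hc
  obtain ⟨y, hxy⟩ := hc.preconnected.exists_adj_of_nontrivial x
  rw [deleteEdges_adj] at hxy
  exact hxy.2 ⟨hxy.1, Sym2.mem_mk_left x y⟩

lemma edgeConn_le_gDegree [Finite V] [Nontrivial V] (x : V) : edgeConn Γ ≤ gDegree Γ x := by
  classical
  have hfin : (Γ.incidenceSet x).Finite := Set.toFinite _
  calc edgeConn Γ ≤ hfin.toFinset.card :=
        edgeConn_le_card Γ (by simpa using Γ.incidenceSet_subset x)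
          (by simpa using not_connected_deleteEdges_incidenceSet Γ x)
    _ = gDegree Γ x := by
        rw [← Set.ncard_eq_toFinset_card _ hfin, gDegree, ← Nat.card_coe_set_eq,
          ← Nat.card_coe_set_eq]
        exact Nat.card_congr (Γ.incidenceSetEquivNeighborSet x)

lemma exists_card_eq_edgeConn [Finite V] [Nontrivial V] :
    ∃ s : Finset (Sym2 V), s.card = edgeConn Γ ∧ ↑s ⊆ Γ.edgeSet ∧
      ¬ (Γ.deleteEdges ↑s).Connected := by
  classical
  obtain ⟨x⟩ := (inferInstance : Nonempty V)
  have hfin : (Γ.incidenceSet x).Finite := Set.toFinite _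
  refine Nat.sInf_mem (s := {k | ∃ s : Finset (Sym2 V), s.card = k ∧ ↑s ⊆ Γ.edgeSet ∧
    ¬ (Γ.deleteEdges ↑s).Connected}) ⟨_, hfin.toFinset, rfl, ?_, ?_⟩
  · simpa using Γ.incidenceSet_subset x
  · simpa using not_connected_deleteEdges_incidenceSet Γ x

lemma edgeConn_eq_zero_iff [Finite V] [Nontrivial V] : edgeConn Γ = 0 ↔ ¬ Γ.Connected := by
  refine ⟨fun h0 hc => ?_, fun hnc => Nat.eq_zero_of_le_zero ?_⟩
  · obtain ⟨s, hs, -, hdisc⟩ := exists_card_eq_edgeConn Γ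
    rw [h0, Finset.card_eq_zero] at hs
    exact hdisc (by simpa [hs] using hc)
  · simpa using edgeConn_le_card Γ (s := ∅) (by simp) (by simpa using hnc)

lemma edgeConn_le_card_sub_two [Finite V] (hΓ : Γ ≠ ⊤) : edgeConn Γ ≤ Nat.card V - 2 := by
  obtain ⟨x, y, hxy, hnadj⟩ : ∃ x y, x ≠ y ∧ ¬ Γ.Adj x y := by
    by_contra! h
    exact hΓ (SimpleGraph.ext (funext₂ fun x y => propext ⟨Γ.ne_of_adj, h x y⟩))
  have : Nontrivial V := ⟨x, y, hxy⟩
  have hsub : Γ.neighborSet x ⊆ {x, y}ᶜ := by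
    rintro v hv (rfl | rfl)
    exacts [Γ.irrefl hv, hnadj hv]
  calc edgeConn Γ ≤ gDegree Γ x := edgeConn_le_gDegree Γ x
    _ ≤ ({x, y}ᶜ : Set V).ncard := Set.ncard_le_ncard hsub
    _ = Nat.card V - 2 := by rw [Set.ncard_compl, Set.ncard_pair hxy]

lemma ncard_commonNeighbors_le_edgeConn_deleteEdges [Finite V] [Nontrivial V] {a b : V}
    (hdrop : edgeConn (Γ.deleteEdges {s(a, b)}) < edgeConn Γ) :
    (Γ.commonNeighbors a b).ncard ≤ edgeConn (Γ.deleteEdges {s(a, b)}) := by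
  classical
  obtain ⟨S, hcard, hsub, hdisc⟩ := exists_card_eq_edgeConn (Γ.deleteEdges {s(a, b)})
  have hconn : (Γ.deleteEdges ↑S).Connected := by
    by_contra hnc
    have := edgeConn_le_card Γ (hsub.trans (edgeSet_mono (Γ.deleteEdges_le _))) hnc
    omega
  -- `S` cuts `Γ - ab` but not `Γ`, so `ab` is a bridge of `Γ - S`
  have hbridge : (Γ.deleteEdges ↑S).IsBridge s(a, b) := by
    by_contra h
    refine hdisc ?_
    rw [deleteEdges_deleteEdges, Set.union_comm, ← deleteEdges_deleteEdges]
    exact hconn.connected_delete_edge_of_not_isBridge h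
  have hcover : ∀ u ∈ Γ.commonNeighbors a b, s(a, u) ∈ S ∨ s(b, u) ∈ S := by
    intro u hu
    by_contra! h
    rw [mem_commonNeighbors] at hu
    rw [isBridge_iff] at hbridge
    refine hbridge ((Adj.reachable (v := u) ?_).trans (Adj.reachable ?_).symm)
    · simp [hu.1, h.1, hu.1.ne', hu.2.ne']
    · simp [hu.2, h.2, hu.1.ne', hu.2.ne']
  let f : V → Sym2 V := fun u => if s(a, u) ∈ S then s(a, u) else s(b, u)
  calc (Γ.commonNeighbors a b).ncard ≤ (S : Set (Sym2 V)).ncard := by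
        refine Set.ncard_le_ncard_of_injOn f (fun u hu => ?_) (fun u hu v hv huv => ?_)
        · simp only [f]
          split_ifs with h
          exacts [h, (hcover u hu).resolve_left h]
        · rw [mem_commonNeighbors] at hu hv
          simp only [f] at huv
          split_ifs at huv <;> grind [Sym2.eq_iff, Adj.ne]
    _ = _ := by rw [Set.ncard_coe_finset, hcard]

lemma MinimallyEdgeConnected.isTree [Finite V] (hΓ : MinimallyEdgeConnected Γ)
    (h1 : edgeConn Γ = 1) : Γ.IsTree := by
  obtain ⟨hnt, hconn, hdrop⟩ := hΓ
  refine ⟨hconn, isAcyclic_iff_forall_isBridge.2 fun e he => ?_⟩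
  induction e using Sym2.ind with
  | h u v =>
    by_contra hnb
    have h0 := hdrop _ he
    rw [h1, edgeConn_eq_zero_iff] at h0
    exact h0 (hconn.connected_delete_edge_of_not_isBridge hnb)

end EdgeConnectivity

section PowerGraph

variable {G : Type*} [Group G]

lemma powerGraph_adj_of_mem_zpowers [Finite G] {g u : G} (hu : u ∈ zpowers g) (hne : u ≠ g) :
    (powerGraph G).Adj g u := by
  obtain ⟨n, rfl⟩ := mem_powers_iff_mem_zpowers.mpr hu
  refine ⟨hne.symm, Or.inl ⟨n + orderOf g, Nat.add_pos_right n (orderOf_pos g), ?_⟩⟩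
  rw [pow_add, pow_orderOf_eq_one, mul_one]

lemma powerGraph_adj_one [Finite G] {u : G} (hu : u ≠ 1) : (powerGraph G).Adj 1 u :=
  (powerGraph_adj_of_mem_zpowers (one_mem _) hu.symm).symm

lemma powerGraph_commonNeighbors_one_eq_compl [Finite G] {g : G} (hg : zpowers g = ⊤) :
    (powerGraph G).commonNeighbors 1 g = {1, g}ᶜ := by
  ext u
  simp only [SimpleGraph.mem_commonNeighbors, Set.mem_compl_iff, Set.mem_insert_iff,
    Set.mem_singleton_iff, not_or]
  exact ⟨fun h => ⟨h.1.ne', h.2.ne'⟩,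
    fun h => ⟨powerGraph_adj_one h.1, powerGraph_adj_of_mem_zpowers (hg ▸ mem_top u) h.2⟩⟩

lemma Subgroup.eq_one_or_eq_of_card_eq_two {H : Subgroup G} (hH : Nat.card H = 2) {t : G} (ht : t ∈ H)
    (ht1 : t ≠ 1) {x : G} (hx : x ∈ H) : x = 1 ∨ x = t := by
  obtain ⟨y, -, hy⟩ := (Nat.card_eq_two_iff' (1 : H)).1 hH
  by_contra! h
  have hxy : (⟨x, hx⟩ : H) = y := hy _ (by simpa using h.1)
  have hty : (⟨t, ht⟩ : H) = y := hy _ (by simpa using ht1)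
  exact h.2 (congrArg Subtype.val (hxy.trans hty.symm))

lemma powerGraph_adj_eq_one_or_zpowers_eq_top {H : Subgroup G} (hH : Nat.card H = 2)
    (hmax : IsCoatom H) {t v : G} (ht : t ∈ H) (ht1 : t ≠ 1) (hadj : (powerGraph G).Adj t v) :
    v = 1 ∨ zpowers v = ⊤ := by
  obtain ⟨hne, ⟨n, -, rfl⟩ | ⟨m, -, rfl⟩⟩ := hadj
  · exact Or.inl ((eq_one_or_eq_of_card_eq_two hH ht ht1 (pow_mem ht n)).resolve_right hne.symm)
  · have hle : H ≤ zpowers v := fun x hx => by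
      rcases eq_one_or_eq_of_card_eq_two hH ht ht1 hx with rfl | rfl
      exacts [one_mem _, npow_mem_zpowers v m]
    rcases hle.eq_or_lt with heq | hlt
    · exact Or.inl ((eq_one_or_eq_of_card_eq_two hH ht ht1 (heq ▸ mem_zpowers v)).resolve_right
        hne.symm)
    · exact Or.inr (hmax.lt_iff.1 hlt)

end PowerGraph

/-- If the power graph of a finite group is non-complete and minimally edge-connected
and the group has a maximal subgroup of order two, then the edge-connectivity of the
power graph is 1 and the power graph is a tree. -/
theorem stmt_14 (G : Type*) [Group G] [Fintype G]
    (hnc : powerGraph G ≠ ⊤) (hmin : MinimallyEdgeConnected (powerGraph G))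
    (hmax : ∃ H : Subgroup G, Nat.card H = 2 ∧ IsCoatom H) :
    edgeConn (powerGraph G) = 1 ∧ (powerGraph G).IsTree := by
  obtain ⟨H, hH, hHmax⟩ := hmax
  obtain ⟨⟨t, htH⟩, ht1, -⟩ := (Nat.card_eq_two_iff' (1 : H)).1 hH
  replace ht1 : t ≠ 1 := by simpa using ht1
  have : Nontrivial G := hmin.1
  have hpos : edgeConn (powerGraph G) ≠ 0 := (edgeConn_eq_zero_iff _).not_left.2 hmin.2.1
  by_cases hgen : ∃ g, (powerGraph G).Adj t g ∧ g ≠ 1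
  · obtain ⟨g, htg, hg1⟩ := hgen
    have hg : zpowers g = ⊤ :=
      (powerGraph_adj_eq_one_or_zpowers_eq_top hH hHmax htH ht1 htg).resolve_left hg1
    have hdrop := hmin.2.2 s(1, g) (powerGraph_adj_one hg1)
    have hcut :=
      ncard_commonNeighbors_le_edgeConn_deleteEdges (powerGraph G) (a := 1) (b := g) (by omega)
    rw [powerGraph_commonNeighbors_one_eq_compl hg, hdrop, Set.ncard_compl,
      Set.ncard_pair hg1.symm] at hcut
    have := edgeConn_le_card_sub_two _ hnc
    omega
  · push Not at hgen
    have hdeg : gDegree (powerGraph G) t = 1 := by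
      rw [gDegree, ← Set.ncard_singleton (1 : G)]
      exact congrArg _ (Set.ext fun v => ⟨hgen v, fun h => h ▸ (powerGraph_adj_one ht1).symm⟩)
    have h1 : edgeConn (powerGraph G) = 1 :=
      le_antisymm (hdeg ▸ edgeConn_le_gDegree _ t) (Nat.one_le_iff_ne_zero.2 hpos)
    exact ⟨h1, hmin.isTree _ h1⟩
end

section
/- Let G be a finite group in which every maximal cyclic subgroup is generated by an element of order greater than 2, and suppose the power graph 𝒢(G) is minimally edge-connected. Then the exponent of G equals δ(𝒢(G)) + 1. -/
open Subgroup

/-!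
The identity is adjacent to every other vertex of the power graph. Deleting the edge `{1, z}`
lowers the edge-connectivity `κ'` by one, so some minimum edge cut contains that edge and hence
separates `1` from `z`. Sending a neighbour `w` of `z` to the edge `{z, w}` if `w` lies on the side
of `1`, and to `{1, w}` otherwise, injects the neighbourhood of `z` into this cut, so
`deg z ≤ κ' ≤ δ`: every non-identity vertex has degree `δ`. A generator `y` of a maximal cyclic
subgroup is adjacent exactly to `⟨y⟩ \ {y}`, so `o(y) = δ + 1`, and since every element lies in
a maximal cyclic subgroup the exponent is `δ + 1`.
-/

namespace SimpleGraph

variable {V : Type*} {Γ : SimpleGraph V}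

lemma exists_card_eq_edgeConn [Finite V] [Nontrivial V] (Γ : SimpleGraph V) :
    ∃ s : Finset (Sym2 V), s.card = edgeConn Γ ∧ ↑s ⊆ Γ.edgeSet ∧
      ¬ (Γ.deleteEdges ↑s).Connected := by
  exact Nat.sInf_mem (s := {k | ∃ s : Finset (Sym2 V), s.card = k ∧ ↑s ⊆ Γ.edgeSet ∧
    ¬ (Γ.deleteEdges ↑s).Connected}) ⟨_, Γ.edgeSet.toFinite.toFinset, rfl, by simp, by
    simp [connected_bot_iff, not_subsingleton]⟩

lemma edgeConn_pos [Finite V] [Nontrivial V] (hΓ : Γ.Connected) : 0 < edgeConn Γ := by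
  obtain ⟨s, hcard, -, hdisc⟩ := exists_card_eq_edgeConn Γ
  refine Nat.pos_of_ne_zero fun h => hdisc ?_
  rwa [Finset.card_eq_zero.mp (hcard.trans h), Finset.coe_empty, deleteEdges_empty]

lemma edgeConn_le_gDegree [Finite V] [Nontrivial V] (x : V) : edgeConn Γ ≤ gDegree Γ x := by
  classical
  have hfin := (Γ.incidenceSet x).toFinite
  refine Nat.sInf_le ⟨hfin.toFinset, ?_, by simpa using Γ.incidenceSet_subset x, fun hcon => ?_⟩
  · rw [← Set.ncard_eq_toFinset_card _ hfin, gDegree, ← Nat.card_coe_set_eq,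
      ← Nat.card_coe_set_eq, Nat.card_congr (Γ.incidenceSetEquivNeighborSet x)]
  · obtain ⟨y, hy⟩ := exists_ne x
    obtain ⟨w⟩ := hcon.preconnected x y
    cases w with
    | nil => exact hy rfl
    | cons hadj _ =>
      rw [deleteEdges_adj, Set.Finite.coe_toFinset] at hadj
      exact hadj.2 ⟨Γ.mem_edgeSet.mpr hadj.1, Sym2.mem_mk_left _ _⟩

lemma edgeConn_le_gMinDegree [Finite V] [Nontrivial V] : edgeConn Γ ≤ gMinDegree Γ := by
  obtain ⟨x, hx⟩ := Nat.sInf_mem (Set.range_nonempty (gDegree Γ))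
  exact (edgeConn_le_gDegree x).trans_eq hx

lemma Reachable.of_deleteEdges_diff_singleton {s : Set (Sym2 V)} {x y u v : V}
    (hxy : (Γ.deleteEdges s).Reachable x y)
    (huv : (Γ.deleteEdges (s \ {s(x, y)})).Reachable u v) :
    (Γ.deleteEdges s).Reachable u v := by
  have hstep : (Γ.deleteEdges (s \ {s(x, y)})).Adj ≤ (Γ.deleteEdges s).Reachable := by
    intro a b hab
    rw [deleteEdges_adj] at hab
    by_cases hab' : s(a, b) ∈ s
    · rcases Sym2.eq_iff.mp (not_not.mp fun h => hab.2 ⟨hab', h⟩) with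
        ⟨rfl, rfl⟩ | ⟨rfl, rfl⟩
      exacts [hxy, hxy.symm]
    · exact Adj.reachable ((deleteEdges_adj ..).mpr ⟨hab.1, hab'⟩)
  rw [reachable_eq_reflTransGen] at huv hstep ⊢
  exact Relation.reflTransGen_closed hstep _ _ huv

lemma not_reachable_of_mem_of_card_eq_edgeConn {s : Finset (Sym2 V)}
    (hcard : s.card = edgeConn Γ) (hs : ↑s ⊆ Γ.edgeSet) (hdisc : ¬ (Γ.deleteEdges ↑s).Connected)
    {x y : V} (hxy : s(x, y) ∈ s) : ¬ (Γ.deleteEdges ↑s).Reachable x y := by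
  classical
  intro hreach
  have : Nonempty V := ⟨x⟩
  have hle : edgeConn Γ ≤ (s.erase s(x, y)).card := by
    refine Nat.sInf_le ⟨_, rfl, (Finset.coe_subset.mpr (s.erase_subset _)).trans hs,
      fun hcon => hdisc ⟨fun u v => hreach.of_deleteEdges_diff_singleton ?_⟩⟩
    simpa using hcon.preconnected u v
  rw [Finset.card_erase_of_mem hxy, hcard] at hle
  have := Finset.card_pos.mpr ⟨_, hxy⟩
  omega

lemma gDegree_le_card_of_not_reachable [Finite V] {o z : V} (ho : ∀ w, w ≠ o → Γ.Adj o w)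
    {s : Finset (Sym2 V)} (hoz : ¬ (Γ.deleteEdges ↑s).Reachable o z) :
    gDegree Γ z ≤ s.card := by
  classical
  set R := (Γ.deleteEdges ↑s).Reachable o
  have hcross : ∀ a b, R a → ¬ R b → Γ.Adj a b → s(a, b) ∈ s := fun a b ha hb hab => by
    by_contra h
    exact hb (ha.trans (Adj.reachable ((deleteEdges_adj ..).mpr ⟨hab, h⟩)))
  have hRo : R o := Reachable.refl o
  rw [gDegree, ← Set.ncard_coe_finset]
  refine Set.ncard_le_ncard_of_injOn (fun w => if R w then s(z, w) else s(o, w)) ?_ ?_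
    s.finite_toSet
  · intro w hw
    split_ifs with hw'
    · exact Sym2.eq_swap ▸ hcross w z hw' hoz (Γ.adj_symm hw)
    · exact hcross o w hRo hw' (ho w fun h => hw' (h ▸ hRo))
  · intro w hw w' hw' h
    have hz : ∀ a ∈ Γ.neighborSet z, a ≠ z := fun a ha h => Γ.irrefl (h ▸ ha)
    have hzo : z ≠ o := fun h => hoz (h ▸ hRo)
    simp only at h
    split_ifs at h <;> simp only [Sym2.eq_iff] at h <;> grind

lemma exists_card_eq_edgeConn_mem [Finite V] [Nontrivial V] (hΓ : Γ.Connected) {e : Sym2 V}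
    (he : e ∈ Γ.edgeSet) (hdrop : edgeConn (Γ.deleteEdges {e}) = edgeConn Γ - 1) :
    ∃ s : Finset (Sym2 V), e ∈ s ∧ s.card = edgeConn Γ ∧ ↑s ⊆ Γ.edgeSet ∧
      ¬ (Γ.deleteEdges ↑s).Connected := by
  classical
  obtain ⟨s, hcard, hs, hdisc⟩ := exists_card_eq_edgeConn (Γ.deleteEdges {e})
  have hes : e ∉ s := fun h => by simpa using hs h
  refine ⟨insert e s, s.mem_insert_self e, ?_, ?_, ?_⟩
  · have := edgeConn_pos hΓ
    rw [Finset.card_insert_of_notMem hes, hcard, hdrop]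
    omega
  · rw [Finset.coe_insert]
    exact Set.insert_subset he (hs.trans (by simp))
  · rwa [Finset.coe_insert, Set.insert_eq, ← deleteEdges_deleteEdges]

lemma gDegree_eq_gMinDegree_of_forall_adj [Finite V] (hΓ : MinimallyEdgeConnected Γ) {o z : V}
    (ho : ∀ w, w ≠ o → Γ.Adj o w) (hz : z ≠ o) : gDegree Γ z = gMinDegree Γ := by
  obtain ⟨_, hconn, hdrop⟩ := hΓ
  have he : s(o, z) ∈ Γ.edgeSet := ho z hz
  obtain ⟨s, hes, hcard, hs, hdisc⟩ := exists_card_eq_edgeConn_mem hconn he (hdrop _ he)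
  have hcut : gDegree Γ z ≤ s.card := gDegree_le_card_of_not_reachable ho
    (not_reachable_of_mem_of_card_eq_edgeConn hcard hs hdisc hes)
  have hmin : gMinDegree Γ ≤ gDegree Γ z := Nat.sInf_le ⟨z, rfl⟩
  have := edgeConn_le_gMinDegree (Γ := Γ)
  omega

end SimpleGraph

section PowerGraph

variable {G : Type*} [Group G]

lemma IsMaxCyclicGen.ne_one [Nontrivial G] {y : G} (hy : IsMaxCyclicGen y) : y ≠ 1 := by
  rintro rfl
  obtain ⟨x, hx⟩ := exists_ne (1 : G)
  exact hx (zpowers_eq_bot.mp ((hy x (by simp)).symm.trans zpowers_one_eq_bot))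

variable [Finite G]

lemma exists_pos_pow_eq_iff_mem_zpowers {u v : G} :
    (∃ n : ℕ, 0 < n ∧ v = u ^ n) ↔ v ∈ zpowers u := by
  refine ⟨fun ⟨n, _, hn⟩ => hn ▸ pow_mem (mem_zpowers u) n, fun h => ?_⟩
  obtain ⟨n, rfl⟩ := mem_powers_iff_mem_zpowers.mpr h
  refine ⟨n + orderOf u, Nat.add_pos_right n (orderOf_pos u), ?_⟩
  rw [pow_add, pow_orderOf_eq_one, mul_one]

lemma powerGraph_adj_iff {u v : G} :
    (powerGraph G).Adj u v ↔ u ≠ v ∧ (v ∈ zpowers u ∨ u ∈ zpowers v) := by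
  simp only [powerGraph, exists_pos_pow_eq_iff_mem_zpowers]

lemma powerGraph_adj_one_s15 {z : G} (hz : z ≠ 1) : (powerGraph G).Adj 1 z :=
  powerGraph_adj_iff.mpr ⟨Ne.symm hz, Or.inr (one_mem _)⟩

lemma exists_isMaxCyclicGen_mem_zpowers (x : G) : ∃ y : G, IsMaxCyclicGen y ∧ x ∈ zpowers y := by
  obtain ⟨H, ⟨⟨y, rfl⟩, hxy⟩, hmax⟩ := Set.Finite.exists_maximalFor id
    {H : Subgroup G | (∃ y, H = zpowers y) ∧ x ∈ H} (Set.toFinite _)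
    ⟨zpowers x, ⟨x, rfl⟩, mem_zpowers x⟩
  exact ⟨y, fun z hle => le_antisymm hle (hmax ⟨⟨z, rfl⟩, hle hxy⟩ hle), hxy⟩

lemma IsMaxCyclicGen.powerGraph_neighborSet {y : G} (hy : IsMaxCyclicGen y) :
    (powerGraph G).neighborSet y = (zpowers y : Set G) \ {y} := by
  ext w
  simp only [SimpleGraph.mem_neighborSet, powerGraph_adj_iff, Set.mem_sdiff,
    Set.mem_singleton_iff, SetLike.mem_coe]
  refine ⟨fun ⟨hne, h⟩ => ⟨?_, Ne.symm hne⟩, fun ⟨hw, hne⟩ => ⟨Ne.symm hne, Or.inl hw⟩⟩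
  exact h.elim id fun hyw => hy w (zpowers_le.mpr hyw) ▸ mem_zpowers w

lemma IsMaxCyclicGen.gDegree_powerGraph {y : G} (hy : IsMaxCyclicGen y) :
    gDegree (powerGraph G) y = orderOf y - 1 := by
  rw [gDegree, hy.powerGraph_neighborSet, Set.ncard_sdiff_singleton_of_mem (mem_zpowers y),
    ← Nat.card_coe_set_eq, SetLike.coe_sort_coe, Nat.card_zpowers]

lemma IsMaxCyclicGen.orderOf_eq_gMinDegree_add_one
    (hmin : MinimallyEdgeConnected (powerGraph G)) {y : G} (hy : IsMaxCyclicGen y) :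
    orderOf y = gMinDegree (powerGraph G) + 1 := by
  have : Nontrivial G := hmin.1
  have hdeg := SimpleGraph.gDegree_eq_gMinDegree_of_forall_adj hmin
    (fun _ hw => powerGraph_adj_one_s15 hw) hy.ne_one
  rw [hy.gDegree_powerGraph] at hdeg
  have := orderOf_pos y
  omega

end PowerGraph

theorem stmt_15_general (G : Type*) [Group G] [Fintype G]
    (hmin : MinimallyEdgeConnected (powerGraph G)) :
    Monoid.exponent G = gMinDegree (powerGraph G) + 1 := by
  apply Nat.dvd_antisymm
  · refine Monoid.exponent_dvd_of_forall_pow_eq_one fun x => ?_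
    obtain ⟨y, hy, hxy⟩ := exists_isMaxCyclicGen_mem_zpowers x
    rw [← orderOf_dvd_iff_pow_eq_one, ← hy.orderOf_eq_gMinDegree_add_one hmin]
    exact orderOf_dvd_of_mem_zpowers hxy
  · obtain ⟨y, hy, -⟩ := exists_isMaxCyclicGen_mem_zpowers (1 : G)
    rw [← hy.orderOf_eq_gMinDegree_add_one hmin]
    exact Monoid.order_dvd_exponent y

/-- If every maximal cyclic subgroup of a finite group is generated by an element of
order greater than 2 and the power graph is minimally edge-connected, then the
exponent of the group equals the minimum degree of the power graph plus one. -/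
theorem stmt_15 (G : Type*) [Group G] [Fintype G]
    (hgen : ∀ y : G, IsMaxCyclicGen y → 2 < orderOf y)
    (hmin : MinimallyEdgeConnected (powerGraph G)) :
    Monoid.exponent G = gMinDegree (powerGraph G) + 1 :=
  stmt_15_general G hmin
end
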